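/- Let (a_k)_{k∈ℕ} be a sequence of complex numbers such that ∑_{k=0}^∞ a_k converges in ℂ and ∑_{k=0}^∞ |a_k|² < ∞, let Ω := {z ∈ ℂ : a_k·z ≠ 1 for all k ∈ ℕ}, and let f : Ω → ℂ be defined by f(z) = ∑_{k=0}^∞ a_k/(1 − a_k·z). Then for every a ∈ ℂ with a ≠ 0, the set {k ∈ ℕ : a_k = a} is finite, and the function z ↦ (z − 1/a)·f(z) tends to −card{k ∈ ℕ : a_k = a} as z tends to 1/a within Ω. In particular f has a pole at 1/a exactly when a occurs among the a_k, and the residue there equals the negative of the number of indices k with a_k = a. -/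

import Mathlib

/-!
Since `∑ a_k` converges, `a_k → 0`, so only finitely many `a_k` equal `c`; each of them
contributes the term `c / (1 - c z)`, and `(z - c⁻¹) · c / (1 - c z) = -1`. For the remaining
terms write `a_k / (1 - a_k z) = a_k + a_k² z / (1 - a_k z)`: once `|a_k z| ≤ 1/2` the tails are
bounded by the bounded partial sums of `∑ a_k` plus `2 |z| ∑ |a_k|²`, and the finitely many other
terms are continuous at `c⁻¹`. So `f` minus its polar part is bounded near `c⁻¹`, and the factor
`z - c⁻¹` kills it.
-/

open Filter Topology Finset

section PartialSums

variable {E : Type*} [NormedAddCommGroup E] {u : ℕ → E} {L : E}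

theorem tendsto_atTop_zero_of_tendsto_sum_range
    (h : Tendsto (fun N => ∑ k ∈ range N, u k) atTop (𝓝 L)) : Tendsto u atTop (𝓝 0) := by
  have h' := (h.comp (tendsto_add_atTop_nat 1)).sub h
  rw [sub_self] at h'
  simpa [Function.comp_def, sum_range_succ] using h'

theorem exists_norm_sum_Ico_le_of_tendsto_sum_range
    (h : Tendsto (fun N => ∑ k ∈ range N, u k) atTop (𝓝 L)) :
    ∃ B, ∀ K M, K ≤ M → ‖∑ k ∈ Ico K M, u k‖ ≤ B := by
  obtain ⟨B, hB⟩ := h.norm.bddAbove_range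
  refine ⟨B + B, fun K M hKM => ?_⟩
  rw [sum_Ico_eq_sub _ hKM]
  exact (norm_sub_le _ _).trans (add_le_add (hB ⟨M, rfl⟩) (hB ⟨K, rfl⟩))

theorem tendsto_sum_range_sdiff (h : Tendsto (fun N => ∑ k ∈ range N, u k) atTop (𝓝 L))
    (s : Finset ℕ) :
    Tendsto (fun N => ∑ k ∈ range N \ s, u k) atTop (𝓝 (L - ∑ k ∈ s, u k)) := by
  obtain ⟨K, hK⟩ := s.exists_nat_subset_range
  refine (h.sub_const _).congr' ?_
  filter_upwards [eventually_ge_atTop K] with N hN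
  rw [← sum_sdiff (hK.trans (range_subset_range.2 hN)), add_sub_cancel_right]

end PartialSums

theorem finite_setOf_eq_of_tendsto {X : Type*} [TopologicalSpace X] [T1Space X] {u : ℕ → X}
    {x y : X} (hu : Tendsto u atTop (𝓝 x)) (hy : y ≠ x) : {k | u k = y}.Finite := by
  have h : ∀ᶠ k in cofinite, u k ≠ y := by
    rw [Nat.cofinite_eq_atTop]
    exact hu.eventually (compl_singleton_mem_nhds hy.symm)
  simpa using eventually_cofinite.1 h

section GeometricTerms

theorem div_one_sub_mul_eq_add {a z : ℂ} (h : a * z ≠ 1) :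
    a / (1 - a * z) = a + a ^ 2 * z / (1 - a * z) := by
  have : 1 - a * z ≠ 0 := sub_ne_zero.2 h.symm
  field_simp
  ring

theorem norm_sq_mul_div_one_sub_mul_le {a z : ℂ} (h : ‖a‖ * ‖z‖ ≤ 1 / 2) :
    ‖a ^ 2 * z / (1 - a * z)‖ ≤ 2 * ‖a‖ ^ 2 * ‖z‖ := by
  have hden : 1 / 2 ≤ ‖1 - a * z‖ := by
    have := norm_sub_norm_le (1 : ℂ) (a * z)
    rw [norm_one, norm_mul] at this
    linarith
  rw [norm_div, norm_mul, norm_pow, div_le_iff₀ (by linarith)]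
  nlinarith [mul_nonneg (sq_nonneg ‖a‖) (norm_nonneg z)]

theorem sub_inv_mul_div_one_sub_mul {c z : ℂ} (hc : c ≠ 0) (hz : c * z ≠ 1) :
    (z - c⁻¹) * (c / (1 - c * z)) = -1 := by
  have hpole : (z - c⁻¹) * c = -(1 - c * z) := by
    rw [sub_mul, inv_mul_cancel₀ hc]; ring
  rw [← mul_div_assoc, hpole, neg_div, div_self (sub_ne_zero.2 hz.symm)]

variable {a : ℕ → ℂ} {S : ℂ}

theorem exists_norm_sum_Ico_div_one_sub_mul_le
    (hS : Tendsto (fun N => ∑ k ∈ range N, a k) atTop (𝓝 S))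
    (hsq : Summable fun k => ‖a k‖ ^ 2) (R : ℝ) :
    ∃ C, ∀ᶠ K in atTop, ∀ M, K ≤ M → ∀ z : ℂ, ‖z‖ ≤ R →
      ‖∑ k ∈ Ico K M, a k / (1 - a k * z)‖ ≤ C := by
  obtain ⟨B, hB⟩ := exists_norm_sum_Ico_le_of_tendsto_sum_range hS
  have hsmall : ∀ᶠ k in atTop, ‖a k‖ * R < 1 / 2 := by
    have := (tendsto_atTop_zero_of_tendsto_sum_range hS).norm.mul_const R
    rw [norm_zero, zero_mul] at this
    exact this.eventually_lt_const (by norm_num)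
  obtain ⟨K₀, hK₀⟩ := eventually_atTop.1 hsmall
  refine ⟨B + 2 * R * ∑' k, ‖a k‖ ^ 2, eventually_atTop.2 ⟨K₀, fun K hK M hKM z hz => ?_⟩⟩
  have hterm : ∀ k ∈ Ico K M, ‖a k‖ * ‖z‖ ≤ 1 / 2 := fun k hk =>
    (mul_le_mul_of_nonneg_left hz (norm_nonneg _)).trans
      (hK₀ k (hK.trans (mem_Ico.1 hk).1)).le
  have hne : ∀ k ∈ Ico K M, a k * z ≠ 1 := fun k hk h => by
    have := hterm k hk
    rw [← norm_mul, h, norm_one] at this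
    norm_num at this
  have hquad : ‖∑ k ∈ Ico K M, a k ^ 2 * z / (1 - a k * z)‖ ≤ 2 * R * ∑' k, ‖a k‖ ^ 2 :=
    calc ‖∑ k ∈ Ico K M, a k ^ 2 * z / (1 - a k * z)‖
        ≤ ∑ k ∈ Ico K M, 2 * ‖a k‖ ^ 2 * ‖z‖ :=
          (norm_sum_le _ _).trans
            (sum_le_sum fun k hk => norm_sq_mul_div_one_sub_mul_le (hterm k hk))
      _ = 2 * ‖z‖ * ∑ k ∈ Ico K M, ‖a k‖ ^ 2 := by rw [mul_sum]; congr 1; ext; ring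
      _ ≤ 2 * ‖z‖ * ∑' k, ‖a k‖ ^ 2 := by
          gcongr
          exact hsq.sum_le_tsum _ fun k _ => sq_nonneg _
      _ ≤ 2 * R * ∑' k, ‖a k‖ ^ 2 := by gcongr
  rw [sum_congr rfl fun k hk => div_one_sub_mul_eq_add (hne k hk), sum_add_distrib]
  exact (norm_add_le _ _).trans (add_le_add (hB K M hKM) hquad)

theorem exists_eventually_norm_sum_range_sdiff_div_one_sub_mul_le
    (hS : Tendsto (fun N => ∑ k ∈ range N, a k) atTop (𝓝 S))
    (hsq : Summable fun k => ‖a k‖ ^ 2) (s : Finset ℕ) {z₀ : ℂ} (hz₀ : ∀ k ∉ s, a k * z₀ ≠ 1) :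
    ∃ C, ∀ᶠ z in 𝓝 z₀, ∀ᶠ N in atTop, ‖∑ k ∈ range N \ s, a k / (1 - a k * z)‖ ≤ C := by
  obtain ⟨C, hC⟩ := exists_norm_sum_Ico_div_one_sub_mul_le hS hsq (‖z₀‖ + 1)
  obtain ⟨K₁, hK₁⟩ := s.exists_nat_subset_range
  obtain ⟨K, hKC, hK₁K⟩ := (hC.and (eventually_ge_atTop K₁)).exists
  set head : ℂ → ℂ := fun z => ∑ k ∈ range K \ s, a k / (1 - a k * z)
  have hhead : ContinuousAt head z₀ := by
    refine tendsto_finsetSum _ fun k hk => continuousAt_const.div (by fun_prop) ?_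
    exact sub_ne_zero.2 (hz₀ k (mem_sdiff.1 hk).2).symm
  refine ⟨‖head z₀‖ + 1 + C, ?_⟩
  filter_upwards [hhead.norm.eventually (gt_mem_nhds (lt_add_one ‖head z₀‖)),
    continuous_norm.continuousAt.eventually (gt_mem_nhds (lt_add_one ‖z₀‖))] with z hzhead hz
  filter_upwards [eventually_ge_atTop K] with N hN
  have hsplit : ∑ k ∈ range N \ s, a k / (1 - a k * z)
      = head z + ∑ k ∈ Ico K N, a k / (1 - a k * z) := by
    have hsK := hK₁.trans (range_subset_range.2 hK₁K)
    have hsN := hsK.trans (range_subset_range.2 hN)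
    have := sum_range_add_sum_Ico (fun k => a k / (1 - a k * z)) hN
    rw [← sum_sdiff hsK, ← sum_sdiff hsN] at this
    simp only [head]
    linear_combination -this
  rw [hsplit]
  exact (norm_add_le _ _).trans (add_le_add hzhead.le (hKC N hN z hz.le))

end GeometricTerms

/-- Lemma 4.1 (pole/residue part): if `f z = ∑ a_k / (1 - a_k z)` on
`Ω = {z | ∀ k, a_k z ≠ 1}`, then for every `c ≠ 0` the set `{k | a_k = c}` is finite
and `(z - 1/c)·f(z) → -card{k | a_k = c}` as `z → 1/c` within `Ω`. -/
theorem stmt_1 (a : ℕ → ℂ)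
    (hconv : ∃ S : ℂ, Tendsto (fun N => ∑ k ∈ Finset.range N, a k) atTop (𝓝 S))
    (hsq : Summable fun k => ‖a k‖ ^ 2)
    (f : ℂ → ℂ)
    (hf : ∀ z : ℂ, (∀ k, a k * z ≠ 1) →
      Tendsto (fun N => ∑ k ∈ Finset.range N, a k / (1 - a k * z)) atTop (𝓝 (f z)))
    (c : ℂ) (hc : c ≠ 0) :
    {k : ℕ | a k = c}.Finite ∧
    Tendsto (fun z => (z - c⁻¹) * f z) (𝓝[{z : ℂ | ∀ k, a k * z ≠ 1}] c⁻¹)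
      (𝓝 (-(Nat.card {k : ℕ | a k = c} : ℂ))) := by
  obtain ⟨S, hS⟩ := hconv
  have hfin := finite_setOf_eq_of_tendsto (tendsto_atTop_zero_of_tendsto_sum_range hS) hc
  refine ⟨hfin, ?_⟩
  set s := hfin.toFinset
  set Ω := {z : ℂ | ∀ k, a k * z ≠ 1}
  set polar : ℂ → ℂ := fun z => ∑ k ∈ s, a k / (1 - a k * z)
  have hpolar : ∀ z ∈ Ω, (z - c⁻¹) * polar z = -(Nat.card {k : ℕ | a k = c} : ℂ) := by
    intro z hz
    have hs : ∀ k ∈ s, a k = c := fun k hk => hfin.mem_toFinset.1 hk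
    rw [mul_sum, sum_congr rfl fun k hk => by
      rw [hs k hk, sub_inv_mul_div_one_sub_mul hc (hs k hk ▸ hz k)]]
    simp [s, Nat.card_coe_set_eq, Set.ncard_eq_toFinset_card _ hfin]
  obtain ⟨C, hC⟩ := exists_eventually_norm_sum_range_sdiff_div_one_sub_mul_le hS hsq s
    (z₀ := c⁻¹) fun k hk h => hk (hfin.mem_toFinset.2 (by field_simp at h; exact h))
  have hregular : ∀ᶠ z in 𝓝[Ω] c⁻¹, ‖f z - polar z‖ ≤ C := by
    filter_upwards [self_mem_nhdsWithin, nhdsWithin_le_nhds hC] with z hz hCz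
    exact le_of_tendsto (tendsto_sum_range_sdiff (hf z hz) s).norm hCz
  have hvanish : Tendsto (fun z => (z - c⁻¹) * (f z - polar z)) (𝓝[Ω] c⁻¹) (𝓝 0) :=
    (tendsto_sub_nhds_zero_iff.2 (tendsto_nhdsWithin_of_tendsto_nhds continuousAt_id)
      ).zero_mul_isBoundedUnder_le (isBoundedUnder_of_eventually_le hregular)
  have hlim := hvanish.add_const (-(Nat.card {k : ℕ | a k = c} : ℂ))
  rw [zero_add] at hlim
  refine hlim.congr' ?_
  filter_upwards [self_mem_nhdsWithin] with z hz
  rw [← hpolar z hz]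
  ring
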